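/- Fix x̄ ∈ (0, 1/2) and define l(p̂) = (1 − 2p̂) / [ (p̂ * x̄)(1 − p̂ * x̄) · log((1 − p̂ * x̄)/(p̂ * x̄)) ] for p̂ ∈ [0, 1/2). Then l is nonincreasing on [0, 1/2): for all 0 ≤ p̂₁ ≤ p̂₂ < 1/2, l(p̂₂) ≤ l(p̂₁). -/

import Mathlib

/-!
Since `1 - 2 (p̂ * x̄) = (1 - 2p̂)(1 - 2x̄)`, the function `l` is a positive constant times
`lfunCore q = (1 - 2q) / (q(1 - q) ln((1 - q)/q))` evaluated at `q = p̂ * x̄`, and `q` increases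
with `p̂`. The numerator of the derivative of `lfunCore` is `(1 - 2q) - (1 - 2q + 2q²) ln((1 - q)/q)`;
with `u = 1 - 2q` one has `ln((1 - q)/q) = ln((1 + u)/(1 - u)) ≥ 2u` (the first term of its power
series), and `2(1 - 2q + 2q²) ≥ 1` makes the numerator nonpositive.
-/

/-- The star operation `p * x = p(1−x) + (1−p)x`. -/
noncomputable def pstar (p x : ℝ) : ℝ := p * (1 - x) + (1 - p) * x

/-- `l(p̂) = (1 − 2p̂) / [ (p̂ * x̄)(1 − p̂ * x̄) · log₂((1 − p̂ * x̄)/(p̂ * x̄)) ]`. -/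
noncomputable def lfun (xb ph : ℝ) : ℝ :=
  (1 - 2 * ph) /
    (pstar ph xb * (1 - pstar ph xb) * Real.logb 2 ((1 - pstar ph xb) / pstar ph xb))

open Real Set

lemma two_mul_le_log_one_add_div_one_sub {u : ℝ} (h0 : 0 ≤ u) (h1 : u < 1) :
    2 * u ≤ log ((1 + u) / (1 - u)) := by
  rw [log_div (by linarith) (by linarith)]
  simpa using le_hasSum (hasSum_log_sub_log_of_abs_lt_one (abs_lt.2 ⟨by linarith, h1⟩)) 0
    fun k _ ↦ by positivity

lemma one_sub_two_mul_le_mul_log_div {q : ℝ} (h0 : 0 < q) (h1 : q < 1 / 2) :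
    1 - 2 * q ≤ (1 - 2 * q + 2 * q ^ 2) * log ((1 - q) / q) := by
  have hlog : 2 * (1 - 2 * q) ≤ log ((1 - q) / q) := by
    have hq : (1 - q) / q = (1 + (1 - 2 * q)) / (1 - (1 - 2 * q)) := by
      field_simp
      ring
    rw [hq]
    exact two_mul_le_log_one_add_div_one_sub (by linarith) (by linarith)
  nlinarith [sq_nonneg (1 - 2 * q)]

noncomputable def lfunCore (q : ℝ) : ℝ := (1 - 2 * q) / (q * (1 - q) * log ((1 - q) / q))

lemma hasDerivAt_lfunCore {q : ℝ} (h0 : 0 < q) (h1 : q < 1 / 2) :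
    HasDerivAt lfunCore ((1 - 2 * q - (1 - 2 * q + 2 * q ^ 2) * log ((1 - q) / q)) /
      (q * (1 - q) * log ((1 - q) / q)) ^ 2) q := by
  have h1q : 1 - q ≠ 0 := by linarith
  have hL : log ((1 - q) / q) ≠ 0 := (log_pos ((one_lt_div h0).2 (by linarith))).ne'
  have hlog : HasDerivAt (fun x ↦ log ((1 - x) / x)) (-1 / (q * (1 - q))) q := by
    refine ((((hasDerivAt_id' q).const_sub 1).div (hasDerivAt_id' q) h0.ne').log
      (div_ne_zero h1q h0.ne')).congr_deriv ?_
    simp only [Pi.div_apply]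
    field_simp
    ring
  have hden := (((hasDerivAt_id' q).mul ((hasDerivAt_id' q).const_sub 1)).mul hlog)
  refine ((((hasDerivAt_id' q).const_mul 2).const_sub 1).div hden
    (by simp [h0.ne', h1q, hL])).congr_deriv ?_
  simp only [Pi.mul_apply]
  generalize log ((1 - q) / q) = L at hL ⊢
  field_simp
  ring

lemma antitoneOn_lfunCore : AntitoneOn lfunCore (Ioo 0 (1 / 2)) := by
  have hderiv : ∀ q ∈ Ioo (0 : ℝ) (1 / 2), HasDerivAt lfunCore _ q :=
    fun q hq ↦ hasDerivAt_lfunCore hq.1 hq.2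
  refine antitoneOn_of_deriv_nonpos (convex_Ioo 0 (1 / 2))
    (HasDerivAt.continuousOn hderiv) (fun q hq ↦ ?_) (fun q hq ↦ ?_) <;> rw [interior_Ioo] at hq
  · exact (hderiv q hq).differentiableAt.differentiableWithinAt
  · rw [(hderiv q hq).deriv]
    exact div_nonpos_of_nonpos_of_nonneg
      (sub_nonpos.2 (one_sub_two_mul_le_mul_log_div hq.1 hq.2)) (sq_nonneg _)

lemma one_sub_two_mul_pstar (p x : ℝ) : 1 - 2 * pstar p x = (1 - 2 * p) * (1 - 2 * x) := by
  unfold pstar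
  ring

lemma pstar_mem_Ioo {p x : ℝ} (hp0 : 0 ≤ p) (hp : p < 1 / 2) (hx : x ∈ Ioo (0 : ℝ) (1 / 2)) :
    pstar p x ∈ Ioo (0 : ℝ) (1 / 2) := by
  obtain ⟨hx0, hx⟩ := hx
  unfold pstar
  constructor <;> nlinarith

lemma pstar_le_pstar {p₁ p₂ x : ℝ} (hx : x ≤ 1 / 2) (hp : p₁ ≤ p₂) : pstar p₁ x ≤ pstar p₂ x := by
  unfold pstar
  nlinarith

lemma lfun_eq_mul_lfunCore {x : ℝ} (hx : x ≠ 1 / 2) (p : ℝ) :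
    lfun x p = log 2 / (1 - 2 * x) * lfunCore (pstar p x) := by
  have hx' : 1 - 2 * x ≠ 0 := by
    contrapose! hx
    linarith
  rw [lfun, lfunCore, one_sub_two_mul_pstar, logb]
  field_simp

/-- For fixed `x̄ ∈ (0, 1/2)`, the function `l` is nonincreasing on `[0, 1/2)`:
for all `0 ≤ p̂₁ ≤ p̂₂ < 1/2`, `l(p̂₂) ≤ l(p̂₁)`. -/
theorem stmt5 (xb : ℝ) (hx : xb ∈ Set.Ioo (0 : ℝ) (1 / 2)) :
    ∀ p1 p2 : ℝ, 0 ≤ p1 → p1 ≤ p2 → p2 < 1 / 2 → lfun xb p2 ≤ lfun xb p1 := by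
  intro p1 p2 hp1 h12 hp2
  have hxb : xb ≠ 1 / 2 := hx.2.ne
  rw [lfun_eq_mul_lfunCore hxb, lfun_eq_mul_lfunCore hxb]
  refine mul_le_mul_of_nonneg_left ?_ (div_nonneg (log_nonneg one_le_two) (by linarith [hx.2]))
  exact antitoneOn_lfunCore (pstar_mem_Ioo hp1 (h12.trans_lt hp2) hx)
    (pstar_mem_Ioo (hp1.trans h12) hp2 hx) (pstar_le_pstar hx.2.le h12)
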